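/- Let F be a finite chordal polynomial set in K[x_1,...,x_n] such that x_1 < ... < x_n is a perfect elimination ordering of G(F). Let P be a finite polynomial set with G(P) ⊆ G(F), let k be an index with P^(k) ≠ ∅, let T ∈ P^(k), and let R be a finite polynomial set with supp(R) ⊆ supp(P^(k)). Define P' = (P \ P^(k)) ∪ {T} ∪ R. Then G(P') ⊆ G(F). -/

import Mathlib

open MvPolynomial

variable {K : Type*} [Field K] {n : ℕ}

/-- The set of variables effectively appearing in a polynomial. -/
def psupp (F : MvPolynomial (Fin n) K) : Set (Fin n) := ↑F.vars

/-- The set of variables appearing in a set of polynomials. -/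
def ssupp (P : Set (MvPolynomial (Fin n) K)) : Set (Fin n) :=
  ⋃ F ∈ P, psupp F

/-- Adjacency in the associated graph `G(P)`: `p ≠ q` and some polynomial of `P`
contains both variables. -/
def adjG (P : Set (MvPolynomial (Fin n) K)) (p q : Fin n) : Prop :=
  p ≠ q ∧ ∃ F ∈ P, p ∈ psupp F ∧ q ∈ psupp F

/-- `G(P) ⊆ G(Q)`: every edge of `G(P)` is an edge of `G(Q)`. -/
def subG (P Q : Set (MvPolynomial (Fin n) K)) : Prop :=
  ∀ p q, adjG P p q → adjG Q p q

/-- The natural ordering `x_1 < ... < x_n` of the variables is a perfect elimination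
ordering of `G(P)`; in particular `G(P)` is chordal. -/
def isPEO (P : Set (MvPolynomial (Fin n) K)) : Prop :=
  ∀ p q k : Fin n, p < k → q < k → p ≠ q → adjG P p k → adjG P q k → adjG P p q

/-- `F` is nonconstant with leading variable `x_k`. -/
def hasLv (F : MvPolynomial (Fin n) K) (k : Fin n) : Prop :=
  k ∈ psupp F ∧ ∀ j ∈ psupp F, j ≤ k

/-- `P^(k)`: the polynomials of `P` with leading variable `x_k`. -/
def levelSet (P : Set (MvPolynomial (Fin n) K)) (k : Fin n) :
    Set (MvPolynomial (Fin n) K) :=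
  {F | F ∈ P ∧ hasLv F k}

theorem adjG_symm {P : Set (MvPolynomial (Fin n) K)} {p q : Fin n} (h : adjG P p q) :
    adjG P q p :=
  let ⟨hne, F, hF, hp, hq⟩ := h
  ⟨hne.symm, F, hF, hq, hp⟩

theorem subG_mono {P P' Q : Set (MvPolynomial (Fin n) K)} (hP' : P' ⊆ P) (h : subG P Q) :
    subG P' Q := by
  rintro p q ⟨hne, F, hF, hp, hq⟩
  exact h p q ⟨hne, F, hP' hF, hp, hq⟩

theorem subG_union {P P' Q : Set (MvPolynomial (Fin n) K)} (h : subG P Q) (h' : subG P' Q) :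
    subG (P ∪ P') Q := by
  rintro p q ⟨hne, F, hF | hF, hp, hq⟩
  · exact h p q ⟨hne, F, hF, hp, hq⟩
  · exact h' p q ⟨hne, F, hF, hp, hq⟩

theorem subG_of_pairwise_adjG {R Q : Set (MvPolynomial (Fin n) K)}
    (h : (ssupp R).Pairwise (adjG Q)) : subG R Q := by
  rintro p q ⟨hne, F, hF, hp, hq⟩
  exact h (Set.mem_biUnion hF hp) (Set.mem_biUnion hF hq) hne

theorem lt_and_adjG_of_mem_ssupp_levelSet {P : Set (MvPolynomial (Fin n) K)} {k p : Fin n}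
    (hp : p ∈ ssupp (levelSet P k)) (hpk : p ≠ k) : p < k ∧ adjG P p k := by
  obtain ⟨F, ⟨hFP, hkF, hlv⟩, hpF⟩ := Set.mem_iUnion₂.mp hp
  exact ⟨lt_of_le_of_ne (hlv p hpF) hpk, hpk, F, hFP, hpF, hkF⟩

/-- Every variable of `P^(k)` other than `x_k` is a smaller neighbour of `x_k` in `G(P)`, so by
the perfect elimination property the support of `P^(k)` is a clique of `G(Fs)`. -/
theorem pairwise_adjG_ssupp_levelSet {Fs P : Set (MvPolynomial (Fin n) K)} (hpeo : isPEO Fs)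
    (hPF : subG P Fs) (k : Fin n) : (ssupp (levelSet P k)).Pairwise (adjG Fs) := by
  intro p hp q hq hne
  by_cases hpk : p = k
  · subst hpk
    exact hPF _ _ (adjG_symm (lt_and_adjG_of_mem_ssupp_levelSet hq (Ne.symm hne)).2)
  by_cases hqk : q = k
  · subst hqk
    exact hPF _ _ (lt_and_adjG_of_mem_ssupp_levelSet hp hne).2
  obtain ⟨hpk', hpadj⟩ := lt_and_adjG_of_mem_ssupp_levelSet hp hpk
  obtain ⟨hqk', hqadj⟩ := lt_and_adjG_of_mem_ssupp_levelSet hq hqk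
  exact hpeo p q k hpk' hqk' hne (hPF _ _ hpadj) (hPF _ _ hqadj)

theorem statement6_general {K : Type*} [Field K] {n : ℕ}
    (Fs : Set (MvPolynomial (Fin n) K)) (hpeo : isPEO Fs)
    (P : Set (MvPolynomial (Fin n) K)) (hPF : subG P Fs)
    (k : Fin n) (T : MvPolynomial (Fin n) K) (hT : T ∈ levelSet P k)
    (R : Set (MvPolynomial (Fin n) K))
    (hRsupp : ssupp R ⊆ ssupp (levelSet P k)) :
    subG ((P \ levelSet P k) ∪ {T} ∪ R) Fs := by
  have hkept : (P \ levelSet P k) ∪ {T} ⊆ P :=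
    Set.union_subset Set.sdiff_subset (Set.singleton_subset_iff.mpr hT.1)
  have hclique := pairwise_adjG_ssupp_levelSet hpeo hPF k
  exact subG_union (subG_mono hkept hPF) (subG_of_pairwise_adjG (hclique.mono hRsupp))

/-- let `Fs` be a finite chordal polynomial set whose natural variable
ordering is a perfect elimination ordering, `P` a finite polynomial set with
`G(P) ⊆ G(Fs)`, `k` an index with `P^(k) ≠ ∅`, `T ∈ P^(k)`, and `R` a finite
polynomial set with `supp R ⊆ supp (P^(k))`.  Then for
`P' = (P \ P^(k)) ∪ {T} ∪ R` we have `G(P') ⊆ G(Fs)`. -/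
theorem statement6 {K : Type*} [Field K] {n : ℕ}
    (Fs : Set (MvPolynomial (Fin n) K)) (hFfin : Fs.Finite) (hpeo : isPEO Fs)
    (P : Set (MvPolynomial (Fin n) K)) (hPfin : P.Finite) (hPF : subG P Fs)
    (k : Fin n) (T : MvPolynomial (Fin n) K) (hT : T ∈ levelSet P k)
    (R : Set (MvPolynomial (Fin n) K)) (hRfin : R.Finite)
    (hRsupp : ssupp R ⊆ ssupp (levelSet P k)) :
    subG ((P \ levelSet P k) ∪ {T} ∪ R) Fs :=
  statement6_general Fs hpeo P hPF k T hT R hRsupp
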